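/- arXiv:2103.10137 — 2 statements merged into one kernel-verified Lean document; each statement's English description precedes it below -/
import Mathlib

section
/- Let C be a category with pullbacks. For arrows f₁ : c₁ → d₁, f₂ : c₂ → d₂, f₃ : c₃ → d₃ of C, define a Corr'-morphism from f₁ to f₂ to be the data of an arrow f : c → d together with morphisms c → c₁, c → c₂, d → d₁, d → d₂ making both squares commute, such that the square with vertices c, c₁, d, d₁ (formed by f, f₁ and the maps c → c₁, d → d₁) is Cartesian and the map c → c₂ is an isomorphism. Then Corr'-morphisms are closed under composition of correspondences: given a Corr'-morphism from f₁ to f₂ with middle arrow f : c → d and a Corr'-morphism from f₂ to f₃ with middle arrow f' : c' → d', the composite correspondence, whose middle arrow is the induced map c ×_{c₂} c' → d ×_{d₂} d' between the fiber products, is again a Corr'-morphism from f₁ to f₃; that is, the square with vertices c ×_{c₂} c', c₁, d ×_{d₂} d', d₁ is Cartesian and the induced composite map c ×_{c₂} c' → c' → c₃ is an isomorphism. -/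
open CategoryTheory CategoryTheory.Limits

attribute [local simp] pullback.lift_fst pullback.lift_snd pullback.lift_fst_assoc pullback.lift_snd_assoc

/-- **Corr'-morphisms are closed under composition of correspondences.**

A Corr'-morphism from `f₁ : c₁ ⟶ d₁` to `f₂ : c₂ ⟶ d₂` is a middle arrow `f : c ⟶ d`
together with maps `a₁ : c ⟶ c₁`, `a₂ : c ⟶ c₂`, `b₁ : d ⟶ d₁`, `b₂ : d ⟶ d₂` making both
squares commute, such that the square `(c, c₁, d, d₁)` is Cartesian and `a₂ : c ⟶ c₂` is an
isomorphism.  Given such data from `f₁` to `f₂` and from `f₂` to `f₃`, the composite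
correspondence, whose middle arrow is the induced map `c ×_{c₂} c' ⟶ d ×_{d₂} d'`, is again a
Corr'-morphism from `f₁` to `f₃`. -/
theorem corr'_comp {C : Type*} [Category C] [HasPullbacks C]
    {c₁ d₁ c₂ d₂ c₃ d₃ c d c' d' : C}
    (f₁ : c₁ ⟶ d₁) (f₂ : c₂ ⟶ d₂) (f₃ : c₃ ⟶ d₃)
    -- the first Corr'-morphism, from f₁ to f₂ :
    (f : c ⟶ d) (a₁ : c ⟶ c₁) (a₂ : c ⟶ c₂) (b₁ : d ⟶ d₁) (b₂ : d ⟶ d₂)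
    (h₁ : a₁ ≫ f₁ = f ≫ b₁) (h₂ : a₂ ≫ f₂ = f ≫ b₂)
    (hcart : IsPullback a₁ f f₁ b₁) (hiso : IsIso a₂)
    -- the second Corr'-morphism, from f₂ to f₃ :
    (f' : c' ⟶ d') (a₂' : c' ⟶ c₂) (a₃' : c' ⟶ c₃) (b₂' : d' ⟶ d₂) (b₃' : d' ⟶ d₃)
    (h₂' : a₂' ≫ f₂ = f' ≫ b₂') (h₃' : a₃' ≫ f₃ = f' ≫ b₃')
    (hcart' : IsPullback a₂' f' f₂ b₂') (hiso' : IsIso a₃') :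
    -- the composite correspondence is again a Corr'-morphism from f₁ to f₃ :
    IsPullback (pullback.fst a₂ a₂' ≫ a₁)
        (pullback.map a₂ a₂' b₂ b₂' f f' f₂ h₂ h₂')
        f₁ (pullback.fst b₂ b₂' ≫ b₁) ∧
      IsIso (pullback.snd a₂ a₂' ≫ a₃') := by
  constructor
  · -- first show the left square `(fst, map, f, fst)` is a pullback
    have S1 : IsPullback (pullback.fst a₂ a₂')
        (pullback.map a₂ a₂' b₂ b₂' f f' f₂ h₂ h₂')
        f (pullback.fst b₂ b₂') := by
      apply IsPullback.of_isLimit (c := PullbackCone.mk _ _ (by simp))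
      apply PullbackCone.IsLimit.mk _
        (fun s => pullback.lift s.fst
          (hcart'.lift (s.fst ≫ a₂) (s.snd ≫ pullback.snd b₂ b₂')
            (by rw [Category.assoc, h₂, ← Category.assoc, s.condition,
                Category.assoc, Category.assoc, pullback.condition]))
          (by rw [hcart'.lift_fst]))
      · intro s
        simp
      · intro s
        apply pullback.hom_ext
        · change (_ ≫ pullback.map a₂ a₂' b₂ b₂' f f' f₂ h₂ h₂') ≫ pullback.fst b₂ b₂' = _
          simp [s.condition, pullback.map]
        · change (_ ≫ pullback.map a₂ a₂' b₂ b₂' f f' f₂ h₂ h₂') ≫ pullback.snd b₂ b₂' = _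
          simp [hcart'.lift_snd, pullback.map]
      · intro s m hm₁ hm₂
        have hm₁ : m ≫ pullback.fst a₂ a₂' = s.fst := hm₁
        have hm₂ : m ≫ pullback.map a₂ a₂' b₂ b₂' f f' f₂ h₂ h₂' = s.snd := hm₂
        apply pullback.hom_ext
        · simpa using hm₁
        · apply hcart'.hom_ext
          · rw [pullback.lift_snd, hcart'.lift_fst, Category.assoc,
              ← pullback.condition, ← Category.assoc, hm₁]
          · rw [pullback.lift_snd, hcart'.lift_snd, Category.assoc]
            have : pullback.snd a₂ a₂' ≫ f' =
                pullback.map a₂ a₂' b₂ b₂' f f' f₂ h₂ h₂' ≫ pullback.snd b₂ b₂' := by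
              simp
            rw [this, ← Category.assoc, hm₂]
    exact S1.paste_horiz hcart
  · have : IsIso (pullback.snd a₂ a₂') := inferInstance
    exact inferInstance
end

section
/- Let C be a category with pushouts. For arrows f₁ : c₁ → d₁, f₂ : c₂ → d₂, f₃ : c₃ → d₃ of C, define a co-Corr'-morphism from f₁ to f₂ to be the data of an arrow f : c → d together with morphisms c₁ → c, c₂ → c, d₁ → d, d₂ → d making both squares commute, such that the square with vertices c₁, c, d₁, d (formed by f₁, f and the maps c₁ → c, d₁ → d) is a pushout square and the map d₂ → d is an isomorphism. Then co-Corr'-morphisms are closed under composition of cospans: given a co-Corr'-morphism from f₁ to f₂ with middle arrow f : c → d and a co-Corr'-morphism from f₂ to f₃ with middle arrow f' : c' → d', the composite cospan, whose middle arrow is the induced map c ⊔_{c₂} c' → d ⊔_{d₂} d' between the pushouts, is again a co-Corr'-morphism from f₁ to f₃; that is, the square with vertices c₁, c ⊔_{c₂} c', d₁, d ⊔_{d₂} d' is a pushout square and the induced composite map d₃ → d' → d ⊔_{d₂} d' is an isomorphism. -/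
open CategoryTheory CategoryTheory.Limits

/-- **co-Corr'-morphisms are closed under composition of cospans.**

A co-Corr'-morphism from `f₁ : c₁ ⟶ d₁` to `f₂ : c₂ ⟶ d₂` is a middle arrow `f : c ⟶ d`
together with maps `u₁ : c₁ ⟶ c`, `u₂ : c₂ ⟶ c`, `v₁ : d₁ ⟶ d`, `v₂ : d₂ ⟶ d` making both
squares commute, such that the square `(c₁, c, d₁, d)` is a pushout square and `v₂ : d₂ ⟶ d`
is an isomorphism.  Given such data from `f₁` to `f₂` and from `f₂` to `f₃`, the composite
cospan, whose middle arrow is the induced map `c ⊔_{c₂} c' ⟶ d ⊔_{d₂} d'`, is again a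
co-Corr'-morphism from `f₁` to `f₃`. -/
theorem coCorr'_comp {C : Type*} [Category C] [HasPushouts C]
    {c₁ d₁ c₂ d₂ c₃ d₃ c d c' d' : C}
    (f₁ : c₁ ⟶ d₁) (f₂ : c₂ ⟶ d₂) (f₃ : c₃ ⟶ d₃)
    -- the first co-Corr'-morphism, from f₁ to f₂ :
    (f : c ⟶ d) (u₁ : c₁ ⟶ c) (u₂ : c₂ ⟶ c) (v₁ : d₁ ⟶ d) (v₂ : d₂ ⟶ d)
    (h₁ : f₁ ≫ v₁ = u₁ ≫ f) (h₂ : f₂ ≫ v₂ = u₂ ≫ f)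
    (hpush : IsPushout f₁ u₁ v₁ f) (hiso : IsIso v₂)
    -- the second co-Corr'-morphism, from f₂ to f₃ :
    (f' : c' ⟶ d') (u₂' : c₂ ⟶ c') (u₃' : c₃ ⟶ c') (v₂' : d₂ ⟶ d') (v₃' : d₃ ⟶ d')
    (h₂' : f₂ ≫ v₂' = u₂' ≫ f') (h₃' : f₃ ≫ v₃' = u₃' ≫ f')
    (hpush' : IsPushout f₂ u₂' v₂' f') (hiso' : IsIso v₃') :
    -- the composite cospan is again a co-Corr'-morphism from f₁ to f₃ :
    IsPushout f₁ (u₁ ≫ pushout.inl u₂ u₂') (v₁ ≫ pushout.inl v₂ v₂')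
        (pushout.map u₂ u₂' v₂ v₂' f f' f₂ h₂.symm h₂'.symm) ∧
      IsIso (v₃' ≫ pushout.inr v₂ v₂') := by
  constructor
  · -- first show the middle square `(c, c ⊔ c', d, d ⊔ d')` is a pushout
    have comm : f ≫ pushout.inl v₂ v₂' = pushout.inl u₂ u₂' ≫
        pushout.map u₂ u₂' v₂ v₂' f f' f₂ h₂.symm h₂'.symm := by simp [pushout.inl_desc]
    have hB : IsPushout f (pushout.inl u₂ u₂') (pushout.inl v₂ v₂')
        (pushout.map u₂ u₂' v₂ v₂' f f' f₂ h₂.symm h₂'.symm) := by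
      refine IsPushout.of_isColimit' ⟨comm⟩ ?_
      have w1 : ∀ s : PushoutCocone f (pushout.inl u₂ u₂'),
          f₂ ≫ v₂ ≫ s.inl = u₂' ≫ pushout.inr u₂ u₂' ≫ s.inr := by
        intro s
        rw [← Category.assoc, h₂, Category.assoc, s.condition, ← Category.assoc,
          pushout.condition, Category.assoc]
      refine PushoutCocone.IsColimit.mk _
        (fun s => pushout.desc s.inl
          (hpush'.desc (v₂ ≫ s.inl) (pushout.inr u₂ u₂' ≫ s.inr) (w1 s))
          (hpush'.inl_desc _ _ _).symm) (fun s => by simp [pushout.inl_desc]) (fun s => ?_) (fun s m hl hr => ?_)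
      · apply pushout.hom_ext
        · simp [s.condition, pushout.inl_desc, pushout.inl_desc_assoc]
        · simp [hpush'.inr_desc, pushout.inr_desc, pushout.inr_desc_assoc]
      · apply pushout.hom_ext
        · simpa [pushout.inl_desc] using hl
        · rw [pushout.inr_desc]
          apply hpush'.hom_ext
          · rw [← Category.assoc, ← pushout.condition, Category.assoc, hl,
              hpush'.inl_desc]
          · rw [← Category.assoc, hpush'.inr_desc]
            have : f' ≫ pushout.inr v₂ v₂' = pushout.inr u₂ u₂' ≫
                pushout.map u₂ u₂' v₂ v₂' f f' f₂ h₂.symm h₂'.symm := by simp [pushout.inr_desc]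
            rw [this, Category.assoc, hr]
    exact hpush.paste_vert hB
  · -- now the isomorphism part
    have : IsIso (pushout.inr v₂ v₂') := inferInstance
    infer_instance
end
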